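/- Let N ≥ 3, let A ∈ ℂ^{N×N} be Hermitian positive definite with eigenvalues λ_0 ≥ λ_1 ≥ ⋯ ≥ λ_{N−1} > 0 (descending, with multiplicity), let b ∈ ℂ^N be a unit vector, let ξ > 0, and suppose the eigenvalues θ_0 ≥ θ_1 ≥ ⋯ ≥ θ_{N−1} of Θ = A − ξ b bᴴ satisfy −θ_0 < θ_{N−1} < −θ_{N−2}. Then θ_0 > |θ_{N−1}| > θ_{N−2} ≥ λ_{N−1} > 0, the largest singular value of Θ equals θ_0, the smallest singular value of Θ equals θ_{N−2}, and the condition number satisfies κ(Θ) = θ_0/θ_{N−2} ≤ λ_0/λ_{N−1} = κ(A). -/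

import Mathlib

open Matrix
open scoped ComplexOrder

noncomputable section

/-- `l` lists the eigenvalues of the Hermitian matrix `A` (with Hermitian proof `hA`)
in descending order with multiplicity. -/
def IsDescEigListing {N : ℕ} {A : Matrix (Fin N) (Fin N) ℂ}
    (hA : A.IsHermitian) (l : Fin N → ℝ) : Prop :=
  Antitone l ∧ ∃ e : Equiv.Perm (Fin N), ∀ i, l i = hA.eigenvalues (e i)

/-!
Since `ξ b bᴴ` is positive semidefinite, `Θ ≤ A` in the Loewner order, so the Rayleigh quotient
bounds give `θ₀ ≤ λ₀`. The eigenvectors of `Θ` for `θ_{N-1}` and `θ_{N-2}` span a plane which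
contains a nonzero `x ⟂ b`; on such an `x` the quadratic forms of `Θ` and `A` agree, so
`λ_{N-1} ‖x‖² ≤ xᴴ A x = xᴴ Θ x ≤ θ_{N-2} ‖x‖²`. With `θ_{N-2} > 0 > θ_{N-1}` and
`θ_{N-1} > -θ₀`, the extreme absolute eigenvalues of `Θ` are `θ₀` and `θ_{N-2}`.
-/

open scoped InnerProductSpace

namespace Matrix.IsHermitian

variable {𝕜 n : Type*} [RCLike 𝕜] [Fintype n] [DecidableEq n] {A : Matrix n n 𝕜}

lemma toEuclideanLin_eigenvectorBasis (hA : A.IsHermitian) (i : n) :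
    toEuclideanLin A (hA.eigenvectorBasis i) = (hA.eigenvalues i : 𝕜) • hA.eigenvectorBasis i := by
  ext j
  simpa [RCLike.real_smul_eq_coe_mul] using congrFun (hA.mulVec_eigenvectorBasis i) j

lemma re_inner_toEuclideanLin_self (hA : A.IsHermitian) (x : EuclideanSpace 𝕜 n) :
    RCLike.re ⟪x, toEuclideanLin A x⟫_𝕜 =
      ∑ i, hA.eigenvalues i * ‖⟪hA.eigenvectorBasis i, x⟫_𝕜‖ ^ 2 := by
  rw [← hA.eigenvectorBasis.sum_inner_mul_inner x, map_sum]
  refine Finset.sum_congr rfl fun i _ => ?_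
  rw [← isSymmetric_toEuclideanLin_iff.mpr hA, toEuclideanLin_eigenvectorBasis, inner_smul_left,
    RCLike.conj_ofReal, ← inner_conj_symm x, mul_left_comm, RCLike.conj_mul]
  norm_cast

lemma re_inner_toEuclideanLin_self_le (hA : A.IsHermitian) {x : EuclideanSpace 𝕜 n} {c : ℝ}
    (hc : ∀ i, ⟪hA.eigenvectorBasis i, x⟫_𝕜 ≠ 0 → hA.eigenvalues i ≤ c) :
    RCLike.re ⟪x, toEuclideanLin A x⟫_𝕜 ≤ c * ‖x‖ ^ 2 := by
  rw [hA.re_inner_toEuclideanLin_self, ← hA.eigenvectorBasis.sum_sq_norm_inner_right,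
    Finset.mul_sum]
  refine Finset.sum_le_sum fun i _ => ?_
  by_cases hi : ⟪hA.eigenvectorBasis i, x⟫_𝕜 = 0
  · simp [hi]
  · exact mul_le_mul_of_nonneg_right (hc i hi) (sq_nonneg _)

lemma le_re_inner_toEuclideanLin_self (hA : A.IsHermitian) {x : EuclideanSpace 𝕜 n} {c : ℝ}
    (hc : ∀ i, ⟪hA.eigenvectorBasis i, x⟫_𝕜 ≠ 0 → c ≤ hA.eigenvalues i) :
    c * ‖x‖ ^ 2 ≤ RCLike.re ⟪x, toEuclideanLin A x⟫_𝕜 := by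
  rw [hA.re_inner_toEuclideanLin_self, ← hA.eigenvectorBasis.sum_sq_norm_inner_right,
    Finset.mul_sum]
  refine Finset.sum_le_sum fun i _ => ?_
  by_cases hi : ⟪hA.eigenvectorBasis i, x⟫_𝕜 = 0
  · simp [hi]
  · exact mul_le_mul_of_nonneg_right (hc i hi) (sq_nonneg _)

end Matrix.IsHermitian

namespace Matrix

variable {𝕜 n : Type*} [RCLike 𝕜] [Fintype n] [DecidableEq n]

lemma toEuclideanLin_vecMulVec_star (b : n → 𝕜) (x : EuclideanSpace 𝕜 n) :
    toEuclideanLin (vecMulVec b (star b)) x = ⟪WithLp.toLp 2 b, x⟫_𝕜 • WithLp.toLp 2 b := by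
  ext i
  simp [vecMulVec_mulVec, EuclideanSpace.inner_eq_star_dotProduct, dotProduct_comm, mul_comm]

lemma re_inner_toEuclideanLin_sub_smul_vecMulVec (A : Matrix n n 𝕜) (b : n → 𝕜) (ξ : ℝ)
    (x : EuclideanSpace 𝕜 n) :
    RCLike.re ⟪x, toEuclideanLin (A - (ξ : 𝕜) • vecMulVec b (star b)) x⟫_𝕜 =
      RCLike.re ⟪x, toEuclideanLin A x⟫_𝕜 - ξ * ‖⟪WithLp.toLp 2 b, x⟫_𝕜‖ ^ 2 := by
  rw [map_sub, map_smul, LinearMap.sub_apply, LinearMap.smul_apply, toEuclideanLin_vecMulVec_star,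
    inner_sub_right, inner_smul_right, inner_smul_right, ← inner_conj_symm x (WithLp.toLp 2 b),
    RCLike.mul_conj, map_sub]
  norm_cast

variable {A : Matrix n n 𝕜} {b : n → 𝕜} {ξ : ℝ}

lemma eigenvalues_sub_smul_vecMulVec_le (hA : A.IsHermitian)
    (hΘ : (A - (ξ : 𝕜) • vecMulVec b (star b)).IsHermitian) (hξ : 0 ≤ ξ) {c : ℝ}
    (hc : ∀ i, hA.eigenvalues i ≤ c) (i : n) : hΘ.eigenvalues i ≤ c := by
  set v := hΘ.eigenvectorBasis i
  have hv : ‖v‖ = 1 := hΘ.eigenvectorBasis.orthonormal.1 i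
  have hΘv := hΘ.le_re_inner_toEuclideanLin_self (x := v) (c := hΘ.eigenvalues i) fun j hj => by
    rw [not_imp_comm.mp (hΘ.eigenvectorBasis.orthonormal.2 ·) hj]
  have hAv := hA.re_inner_toEuclideanLin_self_le (x := v) fun j _ => hc j
  rw [re_inner_toEuclideanLin_sub_smul_vecMulVec, hv] at hΘv
  rw [hv] at hAv
  nlinarith [mul_nonneg hξ (sq_nonneg ‖⟪WithLp.toLp 2 b, v⟫_𝕜‖)]

lemma le_max_eigenvalues_sub_smul_vecMulVec (hA : A.IsHermitian)
    (hΘ : (A - (ξ : 𝕜) • vecMulVec b (star b)).IsHermitian) {c : ℝ}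
    (hc : ∀ i, c ≤ hA.eigenvalues i) {j k : n} (hjk : j ≠ k) :
    c ≤ max (hΘ.eigenvalues j) (hΘ.eigenvalues k) := by
  set v := hΘ.eigenvectorBasis
  set b' := WithLp.toLp 2 b
  obtain ⟨α, β, hαβ, hb'⟩ : ∃ α β : 𝕜, (α ≠ 0 ∨ β ≠ 0) ∧ α * ⟪b', v j⟫_𝕜 + β * ⟪b', v k⟫_𝕜 = 0 := by
    by_cases h : ⟪b', v j⟫_𝕜 = 0
    · exact ⟨1, 0, by simp [h]⟩
    · exact ⟨⟪b', v k⟫_𝕜, -⟪b', v j⟫_𝕜, .inr (neg_ne_zero.mpr h), by ring⟩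
  set x := α • v j + β • v k
  have hvx (i : n) : ⟪v i, x⟫_𝕜 = (if i = j then α else 0) + (if i = k then β else 0) := by
    simp [x, inner_add_right, inner_smul_right, v.inner_eq_ite, eq_comm]
  have hx : x ≠ 0 := fun hx => by
    have hj := hvx j
    have hk := hvx k
    simp only [hx, inner_zero_right, if_pos, if_neg hjk, if_neg hjk.symm] at hj hk
    simp only [add_zero, zero_add] at hj hk
    exact hαβ.elim (· hj.symm) (· hk.symm)
  have hsupp (i : n) (hi : ⟪v i, x⟫_𝕜 ≠ 0) : i = j ∨ i = k := by
    by_contra! h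
    simp [hvx, h.1, h.2] at hi
  have hbx : ⟪b', x⟫_𝕜 = 0 := by
    simp [x, inner_add_right, inner_smul_right, ← hb']
  have hA' := hA.le_re_inner_toEuclideanLin_self (x := x) fun i _ => hc i
  have hΘ' := hΘ.re_inner_toEuclideanLin_self_le (x := x)
    (c := max (hΘ.eigenvalues j) (hΘ.eigenvalues k)) fun i hi => by
      rcases hsupp i hi with rfl | rfl
      exacts [le_max_left _ _, le_max_right _ _]
  rw [re_inner_toEuclideanLin_sub_smul_vecMulVec, hbx, norm_zero, zero_pow two_ne_zero, mul_zero,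
    sub_zero] at hΘ'
  exact le_of_mul_le_mul_right (hA'.trans hΘ') (by positivity)

end Matrix

namespace Antitone

variable {N : ℕ} {θ : Fin N → ℝ}

lemma iSup_abs_fin (hθ : Antitone θ) (hN : 0 < N) (h : |θ ⟨N - 1, by omega⟩| ≤ θ ⟨0, hN⟩) :
    ⨆ j, |θ j| = θ ⟨0, hN⟩ := by
  have : NeZero N := ⟨hN.ne'⟩
  refine le_antisymm (ciSup_le fun j => abs_le.2 ⟨?_, hθ (Nat.zero_le _)⟩)
    (le_ciSup_of_le (Finite.bddAbove_range _) _ (le_abs_self _))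
  have : θ ⟨N - 1, by omega⟩ ≤ θ j := hθ (Fin.le_def.2 (by simp; omega))
  linarith [neg_abs_le (θ ⟨N - 1, by omega⟩)]

lemma iInf_abs_fin (hθ : Antitone θ) (hN : 2 ≤ N) (hpos : 0 < θ ⟨N - 2, by omega⟩)
    (h : θ ⟨N - 2, by omega⟩ ≤ |θ ⟨N - 1, by omega⟩|) :
    ⨅ j, |θ j| = θ ⟨N - 2, by omega⟩ := by
  have : NeZero N := ⟨by omega⟩
  refine le_antisymm (ciInf_le_of_le (Finite.bddBelow_range _) _ (abs_of_pos hpos).le)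
    (le_ciInf fun j => ?_)
  obtain hj | hj := le_or_gt j ⟨N - 2, by omega⟩
  · exact (hθ hj).trans (le_abs_self _)
  · rwa [show j = ⟨N - 1, by omega⟩ from Fin.ext (by simp [Fin.lt_def] at hj ⊢; omega)]

end Antitone

namespace IsDescEigListing

variable {N : ℕ} {A : Matrix (Fin N) (Fin N) ℂ} {hA : A.IsHermitian} {l : Fin N → ℝ}

lemma forall_eigenvalues_iff (hl : IsDescEigListing hA l) {p : ℝ → Prop} :
    (∀ i, p (hA.eigenvalues i)) ↔ ∀ j, p (l j) := by
  obtain ⟨-, e, he⟩ := hl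
  simp only [he]
  exact e.forall_congr_right.symm

lemma iSup_eigenvalues (hl : IsDescEigListing hA l) (f : ℝ → ℝ) :
    ⨆ i, f (hA.eigenvalues i) = ⨆ j, f (l j) := by
  obtain ⟨-, e, he⟩ := hl
  simp only [he]
  exact (e.iSup_comp (g := fun i => f (hA.eigenvalues i))).symm

lemma iInf_eigenvalues (hl : IsDescEigListing hA l) (f : ℝ → ℝ) :
    ⨅ i, f (hA.eigenvalues i) = ⨅ j, f (l j) := by
  obtain ⟨-, e, he⟩ := hl
  simp only [he]
  exact (e.iInf_comp (g := fun i => f (hA.eigenvalues i))).symm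

lemma eigenvalues_le_head (hl : IsDescEigListing hA l) (hN : 0 < N) (i : Fin N) :
    hA.eigenvalues i ≤ l ⟨0, hN⟩ :=
  (hl.forall_eigenvalues_iff (p := (· ≤ l ⟨0, hN⟩))).mpr (fun _ => hl.1 (Nat.zero_le _)) i

lemma last_le_eigenvalues (hl : IsDescEigListing hA l) (hN : 0 < N) (i : Fin N) :
    l ⟨N - 1, by omega⟩ ≤ hA.eigenvalues i :=
  (hl.forall_eigenvalues_iff (p := (l ⟨N - 1, by omega⟩ ≤ ·))).mpr
    (fun j => hl.1 (Fin.le_def.2 (by simp; omega))) i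

end IsDescEigListing

/-- If `ξ > 0` and the descending eigenvalues of `Θ = A - ξ b bᴴ` satisfy
`-θ₀ < θ_{N-1} < -θ_{N-2}`, then `θ₀ > |θ_{N-1}| > θ_{N-2} ≥ λ_{N-1} > 0`, the largest
singular value of `Θ` is `θ₀`, the smallest singular value of `Θ` is `θ_{N-2}`, and
`κ(Θ) = θ₀/θ_{N-2} ≤ λ₀/λ_{N-1} = κ(A)`. -/
theorem sr1r_cond_improvement {N : ℕ} (hN : 3 ≤ N)
    (A : Matrix (Fin N) (Fin N) ℂ) (hA : A.PosDef)
    (lam : Fin N → ℝ) (hlam : IsDescEigListing hA.isHermitian lam)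
    (b : Fin N → ℂ)
    (ξ : ℝ) (hξ : 0 < ξ)
    (Θ : Matrix (Fin N) (Fin N) ℂ)
    (hΘdef : Θ = A - (ξ : ℂ) • vecMulVec b (star b))
    (hΘ : Θ.IsHermitian)
    (θ : Fin N → ℝ) (hθ : IsDescEigListing hΘ θ)
    (hwin : -θ ⟨0, by omega⟩ < θ ⟨N - 1, by omega⟩ ∧
            θ ⟨N - 1, by omega⟩ < -θ ⟨N - 2, by omega⟩) :
    θ ⟨0, by omega⟩ > |θ ⟨N - 1, by omega⟩| ∧
    |θ ⟨N - 1, by omega⟩| > θ ⟨N - 2, by omega⟩ ∧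
    θ ⟨N - 2, by omega⟩ ≥ lam ⟨N - 1, by omega⟩ ∧
    lam ⟨N - 1, by omega⟩ > 0 ∧
    (⨆ i, |hΘ.eigenvalues i|) = θ ⟨0, by omega⟩ ∧
    (⨅ i, |hΘ.eigenvalues i|) = θ ⟨N - 2, by omega⟩ ∧
    θ ⟨0, by omega⟩ / θ ⟨N - 2, by omega⟩ ≤ lam ⟨0, by omega⟩ / lam ⟨N - 1, by omega⟩ := by
  subst hΘdef
  set i₀ : Fin N := ⟨0, by omega⟩
  set i₁ : Fin N := ⟨N - 1, by omega⟩
  set i₂ : Fin N := ⟨N - 2, by omega⟩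
  obtain ⟨hwin₀, hwin₂⟩ := hwin
  have ⟨hθanti, e, he⟩ := hθ
  have hlam_pos : 0 < lam i₁ := hlam.forall_eigenvalues_iff.mp hA.eigenvalues_pos i₁
  have hθ_le : θ i₀ ≤ lam i₀ := he i₀ ▸ eigenvalues_sub_smul_vecMulVec_le hA.isHermitian hΘ
    hξ.le (hlam.eigenvalues_le_head (by omega)) (e i₀)
  have hlam_le : lam i₁ ≤ θ i₂ := by
    have := le_max_eigenvalues_sub_smul_vecMulVec hA.isHermitian hΘ
      (hlam.last_le_eigenvalues (by omega))
      (e.injective.ne (a₁ := i₁) (a₂ := i₂) (by simp [i₁, i₂]; omega))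
    rwa [← he, ← he, max_eq_right (hθanti (Fin.le_def.2 (by simp [i₁, i₂]; omega)))] at this
  have habs : |θ i₁| = -θ i₁ := abs_of_neg (by linarith)
  refine ⟨by linarith, by linarith, hlam_le, hlam_pos, ?_, ?_,
    div_le_div₀ (by linarith) hθ_le hlam_pos hlam_le⟩
  · rw [hθ.iSup_eigenvalues]
    exact hθanti.iSup_abs_fin _ (by linarith)
  · rw [hθ.iInf_eigenvalues]
    exact hθanti.iInf_abs_fin (by omega) (by linarith) (by linarith)
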